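/- arXiv:2101.01944 — 4 statements merged into one kernel-verified Lean document; each statement's English description precedes it below -/
import Mathlib

section
/- If the base category B has pushouts, then the category of Σ-sketches has pushouts: given sketch morphisms φ : K → G and ψ : K → H, the pushout context P of the underlying span together with the union of the translated constraint sets Ctr(φ')(C_G) ∪ Ctr(ψ')(C_H) (φ', ψ' the pushout injections) is a pushout in Sketch(Σ). -/
open CategoryTheory

universe u v

variable {B : Type u} [Category.{v} B]

/-- A footprint: a set of feature symbols with arities in the base category. -/
structure Footprint (B : Type u) [Category.{v} B] where
  P : Type
  ar : P → B

variable {Sg : Footprint B}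

/-- A Σ-structure: a carrier object plus a set of valid interpretations for each symbol. -/
structure Str (Sg : Footprint B) where
  carrier : B
  sem : ∀ p : Sg.P, Set (Sg.ar p ⟶ carrier)

/-- Homomorphisms of Σ-structures: truth of features is preserved. -/
def IsHom (U V : Str Sg) (ς : U.carrier ⟶ V.carrier) : Prop :=
  ∀ (p : Sg.P) (ι : Sg.ar p ⟶ U.carrier), ι ∈ U.sem p → ι ≫ ς ∈ V.sem p

/-- First-order feature expressions with arity an object of the base category. -/
inductive Expr (Sg : Footprint B) : B → Type (max u v)
  | atom {X : B} (p : Sg.P) (a : Sg.ar p ⟶ X) : Expr Sg X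
  | top (X : B) : Expr Sg X
  | bot (X : B) : Expr Sg X
  | and {X : B} : Expr Sg X → Expr Sg X → Expr Sg X
  | or {X : B} : Expr Sg X → Expr Sg X → Expr Sg X
  | not {X : B} : Expr Sg X → Expr Sg X
  | cex {X Y : B} (t : X ⟶ Y) : Expr Sg X → Expr Sg Y → Expr Sg X
  | call {X Y : B} (t : X ⟶ Y) : Expr Sg X → Expr Sg Y → Expr Sg X

/-- Semantics of feature expressions: the set of solutions in a Σ-structure. -/
def Expr.sem (U : Str Sg) : ∀ {X : B}, Expr Sg X → Set (X ⟶ U.carrier)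
  | _, .atom p a => {ι | a ≫ ι ∈ U.sem p}
  | _, .top _ => Set.univ
  | _, .bot _ => ∅
  | _, .and e₁ e₂ => e₁.sem U ∩ e₂.sem U
  | _, .or e₁ e₂ => e₁.sem U ∪ e₂.sem U
  | _, .not e => (e.sem U)ᶜ
  | _, .cex t e₁ e₂ => {ι | ι ∈ e₁.sem U → ∃ κ, t ≫ κ = ι ∧ κ ∈ e₂.sem U}
  | _, .call t e₁ e₂ => {ι | ι ∈ e₁.sem U → ∀ κ, t ≫ κ = ι → κ ∈ e₂.sem U}

/-- A Σ-constraint on a context `K`: an expression with arity `X` and a binding `X ⟶ K`. -/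
structure Constr (Sg : Footprint B) (K : B) where
  X : B
  e : Expr Sg X
  b : X ⟶ K

/-- Translation of constraints along a context morphism (post-composition of bindings). -/
def Constr.map {K G : B} (φ : K ⟶ G) (c : Constr Sg K) : Constr Sg G :=
  ⟨c.X, c.e, c.b ≫ φ⟩

/-- An interpretation of a context `K` in a Σ-structure. -/
structure Interp (Sg : Footprint B) (K : B) where
  U : Str Sg
  ι : K ⟶ U.carrier

/-- Reduct of interpretations along a context morphism (pre-composition). -/
def Interp.reduct {K G : B} (φ : K ⟶ G) (I : Interp Sg G) : Interp Sg K :=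
  ⟨I.U, φ ≫ I.ι⟩

/-- Satisfaction of a constraint by an interpretation. -/
def Interp.Sat {K : B} (I : Interp Sg K) (c : Constr Sg K) : Prop :=
  c.b ≫ I.ι ∈ c.e.sem I.U

/-- Semantic entailment between sets of constraints on a fixed context. -/
def Entails {K : B} (C D : Set (Constr Sg K)) : Prop :=
  ∀ I : Interp Sg K, (∀ c ∈ C, I.Sat c) → ∀ d ∈ D, I.Sat d

/-- A Σ-sketch: a context together with a set of constraints on it. -/
structure Sketch (Sg : Footprint B) where
  K : B
  C : Set (Constr Sg K)

/-- Sketch morphisms: context morphisms whose translated source constraints are entailed. -/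
def IsSketchMor (S T : Sketch Sg) (φ : S.K ⟶ T.K) : Prop :=
  Entails T.C (Constr.map φ '' S.C)

/-- A model of a sketch: an interpretation satisfying all its constraints. -/
def Interp.IsModel (S : Sketch Sg) (I : Interp Sg S.K) : Prop :=
  ∀ c ∈ S.C, I.Sat c

/-- Conservativity (model-expansiveness) of a Σ-structure w.r.t. a sketch rule `L ⇒^φ R`. -/
def Conservative (U : Str Sg) (L R : Sketch Sg) (φ : L.K ⟶ R.K) : Prop :=
  ∀ ι : L.K ⟶ U.carrier, Interp.IsModel L ⟨U, ι⟩ →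
    ∃ κ : R.K ⟶ U.carrier, φ ≫ κ = ι ∧ Interp.IsModel R ⟨U, κ⟩

open Limits in
/-- The pushout sketch: pushout of contexts with the union of translated constraints. -/
noncomputable def pushoutSketch [HasPushouts B] {S : Sketch Sg} (T R : Sketch Sg)
    (φ : S.K ⟶ T.K) (ψ : S.K ⟶ R.K) : Sketch Sg :=
  ⟨pushout φ ψ, Constr.map (pushout.inl φ ψ) '' T.C ∪ Constr.map (pushout.inr φ ψ) '' R.C⟩

/-! The injections are sketch morphisms because the pushout sketch contains their translated
constraints. Since translation is functorial, translating the pushout constraints along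
`pushout.desc g h` gives back those translated along `g` and `h`, which the cocone entails. -/

section

variable {K G H : B}

theorem Constr.map_map (f : K ⟶ G) (g : G ⟶ H) (c : Constr Sg K) :
    (c.map f).map g = c.map (f ≫ g) := by
  simp only [Constr.map, Category.assoc]

theorem Constr.image_map_image_map (f : K ⟶ G) (g : G ⟶ H) (C : Set (Constr Sg K)) :
    Constr.map g '' (Constr.map f '' C) = Constr.map (f ≫ g) '' C := by
  rw [Set.image_image]
  simp only [Constr.map_map]

theorem Entails.of_subset {C D : Set (Constr Sg K)} (h : D ⊆ C) : Entails C D :=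
  fun _ hI d hd => hI d (h hd)

theorem Entails.union {C D₁ D₂ : Set (Constr Sg K)} (h₁ : Entails C D₁) (h₂ : Entails C D₂) :
    Entails C (D₁ ∪ D₂) :=
  fun I hI _ hd => hd.elim (h₁ I hI _) (h₂ I hI _)

end

namespace pushoutSketch

open Limits

variable [HasPushouts B] {S : Sketch Sg} (T R : Sketch Sg) (φ : S.K ⟶ T.K) (ψ : S.K ⟶ R.K)

theorem isSketchMor_inl : IsSketchMor T (pushoutSketch T R φ ψ) (pushout.inl φ ψ) :=
  Entails.of_subset Set.subset_union_left

theorem isSketchMor_inr : IsSketchMor R (pushoutSketch T R φ ψ) (pushout.inr φ ψ) :=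
  Entails.of_subset Set.subset_union_right

variable {T R φ ψ}

theorem isSketchMor_desc {Q : Sketch Sg} {g : T.K ⟶ Q.K} {h : R.K ⟶ Q.K}
    (hg : IsSketchMor T Q g) (hh : IsSketchMor R Q h) (w : φ ≫ g = ψ ≫ h) :
    IsSketchMor (pushoutSketch T R φ ψ) Q (pushout.desc g h w) := by
  unfold IsSketchMor pushoutSketch
  rw [Set.image_union, Constr.image_map_image_map, Constr.image_map_image_map,
    pushout.inl_desc, pushout.inr_desc]
  exact hg.union hh

end pushoutSketch

open Limits in
theorem stmt12_general (Sg : Footprint B) [HasPushouts B] (S T R : Sketch Sg)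
    (φ : S.K ⟶ T.K) (ψ : S.K ⟶ R.K) :
    IsSketchMor T (pushoutSketch T R φ ψ) (pushout.inl φ ψ) ∧
    IsSketchMor R (pushoutSketch T R φ ψ) (pushout.inr φ ψ) ∧
    φ ≫ pushout.inl φ ψ = ψ ≫ pushout.inr φ ψ ∧
    (∀ (Q : Sketch Sg) (g : T.K ⟶ Q.K) (h : R.K ⟶ Q.K),
      IsSketchMor T Q g → IsSketchMor R Q h → φ ≫ g = ψ ≫ h →
      ∃! u : (pushoutSketch T R φ ψ).K ⟶ Q.K,
        pushout.inl φ ψ ≫ u = g ∧ pushout.inr φ ψ ≫ u = h ∧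
        IsSketchMor (pushoutSketch T R φ ψ) Q u) := by
  refine ⟨pushoutSketch.isSketchMor_inl T R φ ψ, pushoutSketch.isSketchMor_inr T R φ ψ,
    pushout.condition, fun Q g h hg hh w => ?_⟩
  refine ⟨pushout.desc g h w,
    ⟨pushout.inl_desc g h w, pushout.inr_desc g h w, pushoutSketch.isSketchMor_desc hg hh w⟩, ?_⟩
  rintro u ⟨hl, hr, -⟩
  exact pushout.hom_ext (hl.trans (pushout.inl_desc g h w).symm)
    (hr.trans (pushout.inr_desc g h w).symm)

open Limits in
/-- If the base category has pushouts then the category of Σ-sketches has pushouts, constructed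
as the pushout of contexts together with the union of the translated constraint sets. -/
theorem stmt12 (Sg : Footprint B) [HasPushouts B] (S T R : Sketch Sg)
    (φ : S.K ⟶ T.K) (ψ : S.K ⟶ R.K) (hφ : IsSketchMor S T φ) (hψ : IsSketchMor S R ψ) :
    IsSketchMor T (pushoutSketch T R φ ψ) (pushout.inl φ ψ) ∧
    IsSketchMor R (pushoutSketch T R φ ψ) (pushout.inr φ ψ) ∧
    φ ≫ pushout.inl φ ψ = ψ ≫ pushout.inr φ ψ ∧
    (∀ (Q : Sketch Sg) (g : T.K ⟶ Q.K) (h : R.K ⟶ Q.K),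
      IsSketchMor T Q g → IsSketchMor R Q h → φ ≫ g = ψ ≫ h →
      ∃! u : (pushoutSketch T R φ ψ).K ⟶ Q.K,
        pushout.inl φ ψ ≫ u = g ∧ pushout.inr φ ψ ≫ u = h ∧
        IsSketchMor (pushoutSketch T R φ ψ) Q u) :=
  stmt12_general Sg S T R φ ψ
end

section
/- The minimalist semantic sketch construction is a full embedding: assuming carriers are contexts, the assignment U ↦ S^U_P = (U₀, { (α(p) ⊢ p(id), ι) | p ∈ P, ι ∈ ⟦p⟧ᵁ }) on objects and ς ↦ ς on morphisms defines a functor from the category of Σ-structures Sem(Σ) to Sketch(Σ) that is full and faithful. -/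
/-! Translating the minimalist sketch of `U` along a homomorphism `ς` lands inside the minimalist
sketch of `V`. Conversely, the identity interpretation of `V` in itself is a model of its minimalist
sketch, and there the translated atomic constraint `(p(id), ι ≫ ς)` holds exactly when
`ι ≫ ς ∈ ⟦p⟧ⱽ`. -/

open CategoryTheory

universe u v

variable {B : Type u} [Category.{v} B]

variable {Sg : Footprint B}

/-- The minimalist semantic sketch of a Σ-structure. -/
def minSketch (U : Str Sg) : Sketch Sg :=
  ⟨U.carrier, {c | ∃ (p : Sg.P) (ι : Sg.ar p ⟶ U.carrier),
      ι ∈ U.sem p ∧ c = ⟨Sg.ar p, Expr.atom p (𝟙 (Sg.ar p)), ι⟩}⟩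

theorem entails_of_subset {K : B} {C D : Set (Constr Sg K)} (h : D ⊆ C) : Entails C D :=
  fun _ hI d hd => hI d (h hd)

theorem Interp.sat_atom_id_iff {K : B} (I : Interp Sg K) (p : Sg.P) (ι : Sg.ar p ⟶ K) :
    I.Sat ⟨Sg.ar p, Expr.atom p (𝟙 (Sg.ar p)), ι⟩ ↔ ι ≫ I.ι ∈ I.U.sem p := by
  simp only [Interp.Sat, Expr.sem, Set.mem_ofPred_eq, Category.id_comp]

theorem Constr.map_image_minSketch_subset {U V : Str Sg} {ς : U.carrier ⟶ V.carrier}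
    (h : IsHom U V ς) : Constr.map ς '' (minSketch U).C ⊆ (minSketch V).C := by
  rintro _ ⟨_, ⟨p, ι, hι, rfl⟩, rfl⟩
  exact ⟨p, ι ≫ ς, h p ι hι, rfl⟩

theorem IsHom.isSketchMor_minSketch {U V : Str Sg} {ς : U.carrier ⟶ V.carrier}
    (h : IsHom U V ς) : IsSketchMor (minSketch U) (minSketch V) ς :=
  entails_of_subset (Constr.map_image_minSketch_subset h)

theorem Interp.isModel_minSketch_id (V : Str Sg) :
    Interp.IsModel (minSketch V) ⟨V, 𝟙 V.carrier⟩ := by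
  rintro _ ⟨p, ι, hι, rfl⟩
  exact (Interp.sat_atom_id_iff _ p ι).2 (by rwa [Category.comp_id])

theorem IsSketchMor.isHom_of_minSketch {U V : Str Sg} {ς : U.carrier ⟶ V.carrier}
    (h : IsSketchMor (minSketch U) (minSketch V) ς) : IsHom U V ς := by
  intro p ι hι
  have hsat := h ⟨V, 𝟙 V.carrier⟩ (Interp.isModel_minSketch_id V) _ ⟨_, ⟨p, ι, hι, rfl⟩, rfl⟩
  simpa only [Category.comp_id] using (Interp.sat_atom_id_iff _ p (ι ≫ ς)).1 hsat

/-- The minimalist semantic sketch construction is a full and faithful embedding of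
Σ-structures into Σ-sketches. -/
theorem stmt14 (Sg : Footprint B) :
    (∀ (U V : Str Sg) (ς : U.carrier ⟶ V.carrier),
      IsHom U V ς → IsSketchMor (minSketch U) (minSketch V) ς) ∧
    (∀ (U V : Str Sg),
      Function.Injective (fun ς : {ς : U.carrier ⟶ V.carrier // IsHom U V ς} =>
        (ς : U.carrier ⟶ V.carrier))) ∧
    (∀ (U V : Str Sg) (ς : U.carrier ⟶ V.carrier),
      IsSketchMor (minSketch U) (minSketch V) ς → IsHom U V ς) :=
  ⟨fun _ _ _ => IsHom.isSketchMor_minSketch, fun _ _ => Subtype.val_injective,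
    fun _ _ _ => IsSketchMor.isHom_of_minSketch⟩
end

section
/- Equivalence of sketches and structures for rules: assuming carriers are contexts, a Σ-structure U is conservative with respect to a Σ-sketch rule L ⇒^φ R if and only if the maximal semantic sketch S^U = (U₀, C^U), where C^U = { (X ⊢ E, ι) | X a variable declaration, ι ∈ ⟦E⟧ᵁ_X }, is closed under the rule L ⇒^φ R. -/
open CategoryTheory

universe u v

variable {B : Type u} [Category.{v} B]

variable {Sg : Footprint B}

/-- The maximal semantic sketch of a Σ-structure: all valid constraints on its carrier. -/
def maxSketch (U : Str Sg) : Sketch Sg :=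
  ⟨U.carrier, {c | c.b ∈ c.e.sem U}⟩

/-- A match of a sketch in a sketch. -/
def IsMatch (S K : Sketch Sg) (m : S.K ⟶ K.K) : Prop :=
  Constr.map m '' S.C ⊆ K.C

/-- Closedness of a sketch under a sketch rule. -/
def ClosedUnder (K L R : Sketch Sg) (φ : L.K ⟶ R.K) : Prop :=
  ∀ m : L.K ⟶ K.K, IsMatch L K m → ∃ n : R.K ⟶ K.K, IsMatch R K n ∧ φ ≫ n = m


lemma match_iff_model (S : Sketch Sg) (U : Str Sg) (m : S.K ⟶ U.carrier) :
    IsMatch S (maxSketch U) m ↔ Interp.IsModel S ⟨U, m⟩ := by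
  constructor
  · intro h c hc
    exact h ⟨c, hc, rfl⟩
  · rintro h _ ⟨c, hc, rfl⟩
    exact h c hc

/-- Equivalence of sketches and structures: a Σ-structure is conservative w.r.t. a sketch rule
iff its maximal semantic sketch is closed under the rule. -/
theorem stmt18 (Sg : Footprint B) (U : Str Sg) (L R : Sketch Sg) (φ : L.K ⟶ R.K) :
    Conservative U L R φ ↔ ClosedUnder (maxSketch U) L R φ := by
  constructor
  · intro h m hm
    obtain ⟨κ, hκ, hmod⟩ := h m ((match_iff_model L U m).1 hm)
    exact ⟨κ, (match_iff_model R U κ).2 hmod, hκ⟩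
  · intro h ι hι
    obtain ⟨n, hn, hφ⟩ := h ι ((match_iff_model L U ι).2 hι)
    exact ⟨n, hφ, (match_iff_model R U n).1 hn⟩
end

section
/- If the base category has pushouts, the model functor Mod : Sketch(Σ)^op → Cat maps pushouts of sketches to pullbacks of categories (amalgamation): given a pushout square of sketches, a model of the pushout sketch is uniquely determined by a compatible pair of models of the two component sketches agreeing on the common sub-sketch. -/
open CategoryTheory

universe u v

variable {B : Type u} [Category.{v} B]

variable {Sg : Footprint B}

theorem Interp.sat_map_iff {K G : B} (I : Interp Sg G) (φ : K ⟶ G) (c : Constr Sg K) :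
    I.Sat (c.map φ) ↔ (I.reduct φ).Sat c := by
  unfold Interp.Sat Constr.map Interp.reduct
  rw [Category.assoc]

open Limits in
theorem Interp.isModel_pushoutSketch_iff [HasPushouts B] {S : Sketch Sg} (T R : Sketch Sg)
    (φ : S.K ⟶ T.K) (ψ : S.K ⟶ R.K) (I : Interp Sg (pushoutSketch T R φ ψ).K) :
    I.IsModel (pushoutSketch T R φ ψ) ↔
      (I.reduct (pushout.inl φ ψ)).IsModel T ∧ (I.reduct (pushout.inr φ ψ)).IsModel R := by
  constructor
  · intro h
    exact ⟨fun c hc ↦ (I.sat_map_iff _ c).1 (h _ (.inl ⟨c, hc, rfl⟩)),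
      fun c hc ↦ (I.sat_map_iff _ c).1 (h _ (.inr ⟨c, hc, rfl⟩))⟩
  · rintro ⟨hT, hR⟩ _ (⟨c, hc, rfl⟩ | ⟨c, hc, rfl⟩)
    exacts [(I.sat_map_iff _ c).2 (hT c hc), (I.sat_map_iff _ c).2 (hR c hc)]

open Limits in
theorem stmt19_general (Sg : Footprint B) [HasPushouts B] (S T R : Sketch Sg)
    (φ : S.K ⟶ T.K) (ψ : S.K ⟶ R.K)
    (U : Str Sg) (ι : T.K ⟶ U.carrier) (κ : R.K ⟶ U.carrier)
    (hι : Interp.IsModel T ⟨U, ι⟩) (hκ : Interp.IsModel R ⟨U, κ⟩)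
    (hagree : φ ≫ ι = ψ ≫ κ) :
    ∃! μ : (pushoutSketch T R φ ψ).K ⟶ U.carrier,
      pushout.inl φ ψ ≫ μ = ι ∧ pushout.inr φ ψ ≫ μ = κ ∧
      Interp.IsModel (pushoutSketch T R φ ψ) ⟨U, μ⟩ := by
  refine ⟨pushout.desc ι κ hagree, ⟨pushout.inl_desc .., pushout.inr_desc .., ?_⟩, ?_⟩
  · rw [Interp.isModel_pushoutSketch_iff]
    simp only [Interp.reduct, pushout.inl_desc, pushout.inr_desc]
    exact ⟨hι, hκ⟩
  · rintro μ ⟨hinl, hinr, -⟩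
    apply pushout.hom_ext
    · rw [hinl, pushout.inl_desc]
    · rw [hinr, pushout.inr_desc]

open Limits in
/-- Amalgamation: the model functor maps pushouts of sketches to pullbacks — a compatible pair
of models of the components amalgamates uniquely to a model of the pushout sketch. -/
theorem stmt19 (Sg : Footprint B) [HasPushouts B] (S T R : Sketch Sg)
    (φ : S.K ⟶ T.K) (ψ : S.K ⟶ R.K) (hφ : IsSketchMor S T φ) (hψ : IsSketchMor S R ψ)
    (U : Str Sg) (ι : T.K ⟶ U.carrier) (κ : R.K ⟶ U.carrier)
    (hι : Interp.IsModel T ⟨U, ι⟩) (hκ : Interp.IsModel R ⟨U, κ⟩)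
    (hagree : φ ≫ ι = ψ ≫ κ) :
    ∃! μ : (pushoutSketch T R φ ψ).K ⟶ U.carrier,
      pushout.inl φ ψ ≫ μ = ι ∧ pushout.inr φ ψ ≫ μ = κ ∧
      Interp.IsModel (pushoutSketch T R φ ψ) ⟨U, μ⟩ :=
  stmt19_general Sg S T R φ ψ U ι κ hι hκ hagree
end
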